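/- arXiv:1007.1049 — 2 statements merged into one kernel-verified Lean document; each statement's English description precedes it below -/
import Mathlib

section
/- In a system of n nodes with a set Z of faulty nodes, |Z| ≤ t and n > 3t: if each non-faulty node p receives a multiset values_p of n values such that values_p and values_q agree on at least n - |Z| common elements (the values of non-faulty nodes), and all elements of all values_p lie in [L, H], then the trimmed averages satisfy |AVG(values_p) - AVG(values_q)| ≤ (H - L) · t / (n - 2t) for all non-faulty p, q. -/
/-- `M` with its `t` smallest and `t` largest elements removed (as a sorted list). -/
noncomputable def trimmed (t : ℕ) (M : Multiset ℝ) : List ℝ :=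
  ((M.sort (· ≤ ·)).drop t).take (Multiset.card M - 2 * t)

/-- The trimmed average: the mean of `M` after removing the `t` smallest and `t` largest. -/
noncomputable def tAVG (t : ℕ) (M : Multiset ℝ) : ℝ :=
  (trimmed t M).sum / ((Multiset.card M : ℝ) - 2 * t)

/-! Let `a`, `b` be the sorted value lists of two non-faulty nodes and `s` the sorted list of
their common values, of length at least `n - t`. Sorted sublists interlace, so
`a[i] ≤ s[i] ≤ b[i + t]`: the trimmed window `a[t, n - t)` is dominated termwise by the window
`b[2t, n)`. Sliding a window of `b` by `t` positions changes its sum by at most `t (H - L)`, as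
`t` values in `[L, H]` leave it and `t` enter, so the trimmed sums differ by at most `t (H - L)`
in either direction; dividing by `n - 2t` gives the bound. -/

namespace List

variable {α : Type*}

theorem Pairwise.rel_getElem_of_sublist {R : α → α → Prop} [Std.Refl R] {s l : List α}
    (hl : l.Pairwise R) (h : s <+ l) {i : ℕ} (hi : i < s.length) :
    R (l[i]'(hi.trans_le h.length_le)) s[i] := by
  have hmem : s[i] ∈ l.drop i :=
    (h.drop i).subset (by rw [drop_eq_getElem_cons hi]; exact mem_cons_self)
  obtain ⟨j, hj, hji⟩ := mem_drop_iff_getElem.mp hmem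
  rw [← hji]
  exact hl.rel_get_of_le (a := ⟨i, _⟩) (b := ⟨i + j, by omega⟩) (by simp [Fin.le_def])

theorem Pairwise.rel_getElem_add_of_sublist {R : α → α → Prop} [Std.Refl R] {s l : List α}
    (hl : l.Pairwise R) (h : s <+ l) {i : ℕ} (hi : i < s.length) :
    R s[i] (l[i + (l.length - s.length)]'(by have := h.length_le; omega)) := by
  have hrev := (pairwise_reverse.mpr hl).rel_getElem_of_sublist (R := fun a b => R b a)
    (reverse_sublist.mpr h) (i := s.length - 1 - i) (by simp only [length_reverse]; omega)
  simp only [getElem_reverse] at hrev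
  convert hrev using 2 <;> (have := h.length_le; omega)

theorem getElem_le_getElem_add_of_common_sublist [Preorder α] {a b s : List α}
    (ha : a.Pairwise (· ≤ ·)) (hb : b.Pairwise (· ≤ ·)) (hsa : s <+ a) (hsb : s <+ b)
    {t i : ℕ} (hs : b.length ≤ s.length + t) (hi : i + t < b.length) :
    a[i]'(by have := hsa.length_le; omega) ≤ b[i + t] :=
  calc _ ≤ s[i]'(by omega) := ha.rel_getElem_of_sublist hsa _
    _ ≤ b[i + (b.length - s.length)] := hb.rel_getElem_add_of_sublist hsb _
    _ ≤ b[i + t] :=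
      hb.rel_get_of_le (a := ⟨_, by omega⟩) (b := ⟨_, hi⟩) (by simp only [Fin.le_def]; omega)

theorem sum_take_drop_le_of_getElem_le {M : Type*} [AddMonoid M] [Preorder M] [AddLeftMono M]
    [AddRightMono M] {a b : List M} {s s' m : ℕ} (ha : s + m ≤ a.length)
    (hb : s' + m ≤ b.length) (h : ∀ i (hi : i < m), a[s + i] ≤ b[s' + i]) :
    ((a.drop s).take m).sum ≤ ((b.drop s').take m).sum := by
  refine Forall₂.sum_le_sum (forall₂_iff_get.mpr
    ⟨by simp only [length_take, length_drop]; omega, fun i h₁ _ => ?_⟩)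
  simpa using h i (by simp only [length_take, length_drop, lt_inf_iff] at h₁; omega)

theorem sum_take_drop_add_le {L H : ℝ} {l : List ℝ} (hl : ∀ x ∈ l, x ∈ Set.Icc L H)
    {s k m : ℕ} (h : s + k + m ≤ l.length) :
    ((l.drop (s + k)).take m).sum ≤ ((l.drop s).take m).sum + k * (H - L) := by
  have hsplit₁ : ((l.drop s).take (k + m)).sum
      = ((l.drop s).take k).sum + ((l.drop (s + k)).take m).sum := by
    rw [take_add, sum_append, drop_drop]
  have hsplit₂ : ((l.drop s).take (m + k)).sum
      = ((l.drop s).take m).sum + ((l.drop (s + m)).take k).sum := by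
    rw [take_add, sum_append, drop_drop]
  have hmem : ∀ r x, x ∈ (l.drop r).take k → x ∈ Set.Icc L H :=
    fun r x hx => hl x (mem_of_mem_drop (mem_of_mem_take hx))
  have hlow : k * L ≤ ((l.drop s).take k).sum := by
    have := card_nsmul_le_sum _ L fun x hx => (hmem s x hx).1
    rwa [length_take, length_drop, min_eq_left (by omega), nsmul_eq_mul] at this
  have hhigh : ((l.drop (s + m)).take k).sum ≤ k * H := by
    have := sum_le_card_nsmul _ H fun x hx => (hmem (s + m) x hx).2
    rwa [length_take, length_drop, min_eq_left (by omega), nsmul_eq_mul] at this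
  rw [add_comm k m] at hsplit₁
  linarith

end List

theorem Multiset.sort_sublist_sort_of_le {α : Type*} (r : α → α → Prop) [DecidableRel r]
    [IsTrans α r] [Std.Antisymm r] [Std.Total r] {s u : Multiset α} (h : s ≤ u) :
    (s.sort r).Sublist (u.sort r) :=
  List.sublist_of_subperm_of_pairwise (coe_le.mp (by rwa [sort_eq, sort_eq]))
    (pairwise_sort _ _) (pairwise_sort _ _)

theorem sum_trimmed_le_sum_trimmed_add {P Q M : Multiset ℝ} {n t : ℕ} {L H : ℝ}
    (hP : Multiset.card P = n) (hQ : Multiset.card Q = n) (h2t : 2 * t ≤ n)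
    (hMP : M ≤ P) (hMQ : M ≤ Q) (hM : n ≤ Multiset.card M + t)
    (hQLH : ∀ y ∈ Q, y ∈ Set.Icc L H) :
    (trimmed t P).sum ≤ (trimmed t Q).sum + t * (H - L) := by
  have hla : (P.sort (· ≤ ·)).length = n := by rw [Multiset.length_sort, hP]
  have hlb : (Q.sort (· ≤ ·)).length = n := by rw [Multiset.length_sort, hQ]
  have hlc : (M.sort (· ≤ ·)).length = Multiset.card M := Multiset.length_sort _
  calc (trimmed t P).sum = (((P.sort (· ≤ ·)).drop t).take (n - 2 * t)).sum := by
        rw [trimmed, hP]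
    _ ≤ (((Q.sort (· ≤ ·)).drop (t + t)).take (n - 2 * t)).sum := by
        refine List.sum_take_drop_le_of_getElem_le (by omega) (by omega) fun i hi => ?_
        convert List.getElem_le_getElem_add_of_common_sublist (t := t) (i := t + i)
          (Multiset.pairwise_sort _ _) (Multiset.pairwise_sort _ _)
          (Multiset.sort_sublist_sort_of_le _ hMP) (Multiset.sort_sublist_sort_of_le _ hMQ)
          (by omega) (by omega) using 2
        omega
    _ ≤ (((Q.sort (· ≤ ·)).drop t).take (n - 2 * t)).sum + t * (H - L) :=
        List.sum_take_drop_add_le (fun x hx => hQLH x ((Multiset.mem_sort _).mp hx)) (by omega)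
    _ = (trimmed t Q).sum + t * (H - L) := by rw [trimmed, hQ]

theorem stmt_10_general {ι : Type*} (n t : ℕ) (ht : 3 * t < n)
    (Z : Finset ι) (hZ : Z.card ≤ t) (L H : ℝ)
    (values : ι → Multiset ℝ)
    (hcard : ∀ p, p ∉ Z → Multiset.card (values p) = n)
    (hrange : ∀ p, p ∉ Z → ∀ y ∈ values p, y ∈ Set.Icc L H)
    (hcommon : ∀ p q, p ∉ Z → q ∉ Z →
      ∃ M : Multiset ℝ, n - Z.card ≤ Multiset.card M ∧ M ≤ values p ∧ M ≤ values q) :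
    ∀ p q, p ∉ Z → q ∉ Z →
      |tAVG t (values p) - tAVG t (values q)| ≤ (H - L) * t / ((n : ℝ) - 2 * t) := by
  intro p q hp hq
  obtain ⟨M, hM, hMp, hMq⟩ := hcommon p q hp hq
  have hpq := sum_trimmed_le_sum_trimmed_add (t := t) (hcard p hp) (hcard q hq) (by omega)
    hMp hMq (by omega) (hrange q hq)
  have hqp := sum_trimmed_le_sum_trimmed_add (t := t) (hcard q hq) (hcard p hp) (by omega)
    hMq hMp (by omega) (hrange p hp)
  have hpos : (0 : ℝ) < n - 2 * t := sub_pos.mpr (by exact_mod_cast (by omega : 2 * t < n))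
  rw [tAVG, tAVG, hcard p hp, hcard q hq, ← sub_div, abs_div, abs_of_pos hpos]
  gcongr
  rw [abs_sub_le_iff]
  constructor <;> linarith

theorem stmt_10 {ι : Type*} [Fintype ι] [DecidableEq ι] (n t : ℕ)
    (hn : Fintype.card ι = n) (ht : 3 * t < n)
    (Z : Finset ι) (hZ : Z.card ≤ t) (L H : ℝ) (hLH : L ≤ H)
    (values : ι → Multiset ℝ)
    (hcard : ∀ p, p ∉ Z → Multiset.card (values p) = n)
    (hrange : ∀ p, p ∉ Z → ∀ y ∈ values p, y ∈ Set.Icc L H)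
    (hcommon : ∀ p q, p ∉ Z → q ∉ Z →
      ∃ M : Multiset ℝ, n - Z.card ≤ Multiset.card M ∧ M ≤ values p ∧ M ≤ values q) :
    ∀ p q, p ∉ Z → q ∉ Z →
      |tAVG t (values p) - tAVG t (values q)| ≤ (H - L) * t / ((n : ℝ) - 2 * t) :=
  stmt_10_general n t ht Z hZ L H values hcard hrange hcommon
end

section
/- If a multiset V of n reals contains a sub-multiset of n - t values that are pairwise within ε of each other, and n > 3t, then the trimmed mean AVG(V) lies within the interval [m, m + ε], where m is the minimum of that sub-multiset; consequently any two trimmed means computed from multisets both containing this sub-multiset are within ε of each other. -/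
/-! At most `t` elements of `V` lie outside `[m, m + ε]`, namely some of those not in `S`.
Hence, after sorting `V` and removing its `t` smallest and `t` largest elements, every remaining
element lies in `[m, m + ε]`, and so does their mean. -/

open Set

namespace List.Pairwise

variable {α : Type*} [LinearOrder α] {l : List α} {t : ℕ}

theorem le_of_mem_drop_of_countP_lt_le (hl : l.Pairwise (· ≤ ·)) {a x : α}
    (hcount : l.countP (· < a) ≤ t) (hx : x ∈ l.drop t) : a ≤ x := by
  by_contra! hxa
  have htake : (l.take t).countP (· < a) = t := by
    have hlen : (l.take t).length = t := by
      have := length_pos_of_mem hx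
      simp only [length_drop, length_take] at this ⊢
      omega
    rw [countP_eq_length.2 fun y hy => by
      simpa using (hl.rel_of_mem_take_of_mem_drop hy hx).trans_lt hxa, hlen]
  have hdrop : 0 < (l.drop t).countP (· < a) := countP_pos_iff.2 ⟨x, hx, by simpa using hxa⟩
  have := take_append_drop t l ▸ hcount
  rw [countP_append] at this
  omega

theorem le_of_mem_take_of_countP_gt_le (hl : l.Pairwise (· ≤ ·)) {b x : α}
    (hcount : l.countP (b < ·) ≤ t) (hx : x ∈ l.take (l.length - t)) : x ≤ b := by
  by_contra! hbx
  have hdrop : (l.drop (l.length - t)).countP (b < ·) = t := by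
    have hlen : (l.drop (l.length - t)).length = t := by
      have := length_pos_of_mem hx
      simp only [length_drop, length_take] at this ⊢
      omega
    rw [countP_eq_length.2 fun y hy => by
      simpa using hbx.trans_le (hl.rel_of_mem_take_of_mem_drop hx hy), hlen]
  have htake : 0 < (l.take (l.length - t)).countP (b < ·) :=
    countP_pos_iff.2 ⟨x, hx, by simpa using hbx⟩
  have := take_append_drop (l.length - t) l ▸ hcount
  rw [countP_append] at this
  omega

end List.Pairwise

theorem List.sum_div_length_mem_Icc {K : Type*} [Field K] [LinearOrder K] [IsStrictOrderedRing K]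
    {l : List K} {a b : K} (hl : l ≠ []) (h : ∀ x ∈ l, x ∈ Icc a b) :
    l.sum / l.length ∈ Icc a b := by
  have hpos : (0 : K) < l.length := by exact_mod_cast List.length_pos_iff.2 hl
  have hlo := l.card_nsmul_le_sum a fun x hx => (h x hx).1
  have hhi := l.sum_le_card_nsmul b fun x hx => (h x hx).2
  rw [nsmul_eq_mul] at hlo hhi
  exact ⟨(le_div_iff₀ hpos).2 (by linarith), (div_le_iff₀ hpos).2 (by linarith)⟩

theorem Multiset.countP_le_card_sub_card_of_le {α : Type*} {S M : Multiset α} (p : α → Prop)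
    [DecidablePred p] (hSM : S ≤ M) (hS : ∀ x ∈ S, ¬ p x) :
    M.countP p ≤ card M - card S := by
  have hS' : card S ≤ M.countP (fun x => ¬ p x) :=
    (countP_eq_card.2 hS).symm.le.trans (countP_le_of_le _ hSM)
  have := card_eq_countP_add_countP p M
  omega

theorem length_trimmed (t : ℕ) (M : Multiset ℝ) :
    (trimmed t M).length = Multiset.card M - 2 * t := by
  simp only [trimmed, List.length_take, List.length_drop, Multiset.length_sort]
  omega

theorem mem_trimmed_Icc {t : ℕ} {M : Multiset ℝ} {a b x : ℝ}
    (hlo : M.countP (· < a) ≤ t) (hhi : M.countP (b < ·) ≤ t) (hx : x ∈ trimmed t M) :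
    x ∈ Icc a b := by
  set l := M.sort (· ≤ ·)
  have hl : l.Pairwise (· ≤ ·) := M.pairwise_sort _
  have hcount (p : ℝ → Prop) [DecidablePred p] : l.countP (p ·) = M.countP p := by
    rw [← Multiset.coe_countP, Multiset.sort_eq]
  have hlen : l.length = Multiset.card M := Multiset.length_sort _
  have hx' : x ∈ (l.take (l.length - t)).drop t := by
    rwa [List.drop_take, hlen, Nat.sub_sub, ← two_mul]
  exact ⟨hl.le_of_mem_drop_of_countP_lt_le (by simpa [hcount] using hlo)
      (List.take_subset _ _ hx),
    hl.le_of_mem_take_of_countP_gt_le (by simpa [hcount] using hhi) (List.drop_subset _ _ hx')⟩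

theorem tAVG_mem_Icc {t : ℕ} {M : Multiset ℝ} {a b : ℝ} (hcard : 2 * t < Multiset.card M)
    (hlo : M.countP (· < a) ≤ t) (hhi : M.countP (b < ·) ≤ t) : tAVG t M ∈ Icc a b := by
  have hlen := length_trimmed t M
  have hne : trimmed t M ≠ [] := List.ne_nil_of_length_pos (by omega)
  have hden : (Multiset.card M : ℝ) - 2 * t = (trimmed t M).length := by
    rw [hlen, Nat.cast_sub hcard.le]
    push_cast
    ring
  rw [tAVG, hden]
  exact List.sum_div_length_mem_Icc hne fun x hx => mem_trimmed_Icc hlo hhi hx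

theorem stmt_16_general (n t : ℕ) (ht : 3 * t < n) (ε : ℝ)
    (S V V' : Multiset ℝ)
    (hS : Multiset.card S = n - t)
    (hV : Multiset.card V = n) (hV' : Multiset.card V' = n)
    (hSV : S ≤ V) (hSV' : S ≤ V')
    (m : ℝ) (hS' : ∀ x ∈ S, m ≤ x ∧ x ≤ m + ε) :
    tAVG t V ∈ Set.Icc m (m + ε) ∧ tAVG t V' ∈ Set.Icc m (m + ε) ∧
      |tAVG t V - tAVG t V'| ≤ ε := by
  have hmem {W : Multiset ℝ} (hW : Multiset.card W = n) (hSW : S ≤ W) :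
      tAVG t W ∈ Icc m (m + ε) := by
    have hlo := Multiset.countP_le_card_sub_card_of_le (· < m) hSW
      fun x hx => not_lt.2 (hS' x hx).1
    have hhi := Multiset.countP_le_card_sub_card_of_le (m + ε < ·) hSW
      fun x hx => not_lt.2 (hS' x hx).2
    rw [hS, hW] at hlo hhi
    exact tAVG_mem_Icc (by omega) (by omega) (by omega)
  obtain ⟨hVlo, hVhi⟩ := hmem hV hSV
  obtain ⟨hV'lo, hV'hi⟩ := hmem hV' hSV'
  refine ⟨⟨hVlo, hVhi⟩, ⟨hV'lo, hV'hi⟩, ?_⟩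
  simpa using abs_sub_le_of_le_of_le hVlo hVhi hV'lo hV'hi

theorem stmt_16 (n t : ℕ) (ht : 3 * t < n) (ε : ℝ) (hε : 0 ≤ ε)
    (S V V' : Multiset ℝ)
    (hS : Multiset.card S = n - t)
    (hV : Multiset.card V = n) (hV' : Multiset.card V' = n)
    (hSV : S ≤ V) (hSV' : S ≤ V')
    (m : ℝ) (hm : m ∈ S) (hS' : ∀ x ∈ S, m ≤ x ∧ x ≤ m + ε) :
    tAVG t V ∈ Set.Icc m (m + ε) ∧ tAVG t V' ∈ Set.Icc m (m + ε) ∧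
      |tAVG t V - tAVG t V'| ≤ ε :=
  stmt_16_general n t ht ε S V V' hS hV hV' hSV hSV' m hS'
end
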